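/- arXiv:1604.06333 — 6 statements merged into one kernel-verified Lean document; each statement's English description precedes it below -/
import Mathlib

section
/- Let h, k, q be natural numbers with h − k ≥ q · k (and k ≤ h). Then there exists an alternating bilinear map ω : ℝ^h × ℝ^h → ℝ^q and a k-dimensional subspace S ⊆ ℝ^h that is both isotropic for ω (ω(u,v) = 0 for all u, v ∈ S) and regular for ω (the linear map ℝ^h → Hom(S, ℝ^q), X ↦ (s ↦ ω(X, s)), is surjective). Concretely, one may take S = ℝ^k × {0}: choosing any surjective linear map L : ℝ^{h−k} → Hom(ℝ^k, ℝ^q), the form ω on ℝ^k ⊕ ℝ^{h−k} defined by ω((u,x),(v,y)) = L(y)(u) − L(x)(v) has S = ℝ^k × {0} as a regular isotropic subspace. -/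
section Aux

variable (h q k : ℕ) (hkh : k ≤ h) (hdim : q * k ≤ h - k)

/-- embedding of first k coordinates -/
def eIdx (b : Fin k) : Fin h := Fin.castLE hkh b

/-- the coordinate index `k + (a*k + b)`. -/
def cIdx (a : Fin q) (b : Fin k) : Fin h :=
  ⟨k + (a.1 * k + b.1), by
    have hb : a.1 * k + b.1 < q * k := by
      calc a.1 * k + b.1 < a.1 * k + k := by omega
        _ = (a.1 + 1) * k := by ring
        _ ≤ q * k := Nat.mul_le_mul_right k a.2
    omega⟩

/-- decode a coordinate index into a pair -/
def decIdx (i : Fin h) : Option (Fin q × Fin k) :=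
  if hi : k ≤ i.1 ∧ i.1 - k < q * k then
    have hqk : 0 < q * k := Nat.lt_of_le_of_lt (Nat.zero_le _) hi.2
    have hk0 : 0 < k := Nat.pos_of_ne_zero (fun hk => by simp [hk] at hqk)
    some (⟨(i.1 - k) / k, Nat.div_lt_of_lt_mul (by rw [mul_comm]; exact hi.2)⟩,
          ⟨(i.1 - k) % k, Nat.mod_lt _ hk0⟩)
  else none

theorem decIdx_cIdx (a : Fin q) (b : Fin k) :
    decIdx h q k (cIdx h q k hkh hdim a b) = some (a, b) := by
  have hval : (cIdx h q k hkh hdim a b).1 = k + (a.1 * k + b.1) := rfl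
  have hb : a.1 * k + b.1 < q * k := by
    calc a.1 * k + b.1 < a.1 * k + k := by omega
      _ = (a.1 + 1) * k := by ring
      _ ≤ q * k := Nat.mul_le_mul_right k a.2
  have hcond : k ≤ (cIdx h q k hkh hdim a b).1 ∧ (cIdx h q k hkh hdim a b).1 - k < q * k := by
    constructor
    · omega
    · rw [hval]; simpa using hb
  have hsub : (cIdx h q k hkh hdim a b).1 - k = a.1 * k + b.1 := by omega
  have hdiv : ((cIdx h q k hkh hdim a b).1 - k) / k = a.1 := by
    rw [hsub, mul_comm a.1 k, Nat.mul_add_div (by omega), Nat.div_eq_of_lt b.2, Nat.add_zero]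
  have hmod : ((cIdx h q k hkh hdim a b).1 - k) % k = b.1 := by
    rw [hsub, mul_comm a.1 k, Nat.mul_add_mod, Nat.mod_eq_of_lt b.2]
  rw [decIdx, dif_pos hcond]
  exact congrArg some (Prod.ext (Fin.ext hdiv) (Fin.ext hmod))

theorem decIdx_eIdx (b : Fin k) : decIdx h q k (eIdx h k hkh b) = none := by
  rw [decIdx, dif_neg]
  simp only [eIdx, Fin.castLE, not_and]
  intro hcon; exact absurd hcon (Nat.not_le_of_lt b.2)

/-- the bilinear form -/
def omegaMap : (Fin h → ℝ) →ₗ[ℝ] (Fin h → ℝ) →ₗ[ℝ] (Fin q → ℝ) :=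
  LinearMap.mk₂ ℝ
    (fun u v => fun a => ∑ b : Fin k,
      (u (eIdx h k hkh b) * v (cIdx h q k hkh hdim a b)
        - u (cIdx h q k hkh hdim a b) * v (eIdx h k hkh b)))
    (by intro u u' v; funext a; simp only [Pi.add_apply]
        rw [← Finset.sum_add_distrib]; exact Finset.sum_congr rfl fun b _ => by ring)
    (by intro r u v; funext a; simp only [Pi.smul_apply, smul_eq_mul]
        rw [Finset.mul_sum]; exact Finset.sum_congr rfl fun b _ => by ring)
    (by intro u v v'; funext a; simp only [Pi.add_apply]
        rw [← Finset.sum_add_distrib]; exact Finset.sum_congr rfl fun b _ => by ring)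
    (by intro r u v; funext a; simp only [Pi.smul_apply, smul_eq_mul]
        rw [Finset.mul_sum]; exact Finset.sum_congr rfl fun b _ => by ring)

/-- the subspace of vectors supported on the first k coordinates -/
def Ssub : Submodule ℝ (Fin h → ℝ) where
  carrier := {x | ∀ i : Fin h, k ≤ i.1 → x i = 0}
  add_mem' := by intro x y hx hy i hi; simp [hx i hi, hy i hi]
  zero_mem' := by intro i _; rfl
  smul_mem' := by intro r x hx i hi; simp [hx i hi]

end Aux

/-- If `h - k ≥ q * k` (and `k ≤ h`), then there exists an alternating bilinear map
`ω : ℝ^h × ℝ^h → ℝ^q` together with a `k`-dimensional subspace `S ⊆ ℝ^h` that is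
isotropic for `ω` and regular for `ω`. -/
theorem exists_regular_isotropic
    (h q k : ℕ) (hkh : k ≤ h) (hdim : q * k ≤ h - k) :
    ∃ (ω : (Fin h → ℝ) →ₗ[ℝ] (Fin h → ℝ) →ₗ[ℝ] (Fin q → ℝ))
      (S : Submodule ℝ (Fin h → ℝ)),
      (∀ u : Fin h → ℝ, ω u u = 0) ∧
      Module.finrank ℝ S = k ∧
      (∀ u ∈ S, ∀ v ∈ S, ω u v = 0) ∧
      (∀ φ : S →ₗ[ℝ] (Fin q → ℝ), ∃ X : Fin h → ℝ, ∀ s : S, ω X s = φ s) := by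
  refine ⟨omegaMap h q k hkh hdim, Ssub h k, ?_, ?_, ?_, ?_⟩
  · intro u
    funext a
    show (∑ b : Fin k, _) = (0 : Fin q → ℝ) a
    simp [mul_comm]
  · -- finrank
    have e : Ssub h k ≃ₗ[ℝ] (Fin k → ℝ) :=
      { toFun := fun s b => s.1 (eIdx h k hkh b)
        invFun := fun x => ⟨fun i => if hi : i.1 < k then x ⟨i.1, hi⟩ else 0, by
          intro i hi; simp [Nat.not_lt_of_le hi]⟩
        map_add' := by intro s t; rfl
        map_smul' := by intro r s; rfl
        left_inv := by
          intro s; ext i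
          by_cases hi : i.1 < k
          · simp [hi, eIdx]
          · simp [hi, s.2 i (Nat.le_of_not_lt hi)]
        right_inv := by
          intro x; funext b
          simp [eIdx, Fin.castLE] }
    rw [LinearEquiv.finrank_eq e]
    simp
  · -- isotropic
    intro u hu v hv
    funext a
    show (∑ b : Fin k, _) = (0 : Fin q → ℝ) a
    have key : ∀ (a : Fin q) (b : Fin k), k ≤ (cIdx h q k hkh hdim a b).1 := by
      intro a b; show k ≤ k + _; omega
    refine (Finset.sum_eq_zero fun b _ => ?_).trans (by simp)
    rw [hu _ (key a b), hv _ (key a b)]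
    ring
  · -- regular
    intro φ
    have sbmem : ∀ b : Fin k, (Pi.single (eIdx h k hkh b) (1:ℝ)) ∈ Ssub h k := by
      intro b i hi
      apply Pi.single_eq_of_ne
      intro hcon
      rw [hcon] at hi
      exact Nat.not_le_of_lt b.2 hi
    set sb : Fin k → Ssub h k := fun b => ⟨Pi.single (eIdx h k hkh b) (1:ℝ), sbmem b⟩ with hsb
    set X : Fin h → ℝ := fun i =>
      (decIdx h q k i).elim 0 (fun p => -(φ (sb p.2) p.1)) with hX
    refine ⟨X, ?_⟩
    intro s
    have hXe : ∀ b : Fin k, X (eIdx h k hkh b) = 0 := by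
      intro b; rw [hX]; simp [decIdx_eIdx]
    have hXc : ∀ (a : Fin q) (b : Fin k), X (cIdx h q k hkh hdim a b) = -(φ (sb b) a) := by
      intro a b; rw [hX]; simp [decIdx_cIdx h q k hkh hdim a b]
    -- decompose s
    have hs : (s : Fin h → ℝ) = ∑ b : Fin k, s.1 (eIdx h k hkh b) • (sb b : Fin h → ℝ) := by
      funext i
      rw [Finset.sum_apply]
      by_cases hi : i.1 < k
      · have hib : Fin.castLE hkh (⟨i.1, hi⟩ : Fin k) = i := Fin.ext rfl
        rw [Finset.sum_eq_single (⟨i.1, hi⟩ : Fin k)]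
        · simp [hsb, eIdx, hib]
        · intro b _ hb
          have hne : i ≠ Fin.castLE hkh b := fun hcon => hb (Fin.ext (congrArg Fin.val hcon).symm)
          simp [hsb, eIdx, Pi.single_apply, hne]
        · intro hcon; exact absurd (Finset.mem_univ _) hcon
      · rw [s.2 i (Nat.le_of_not_lt hi)]
        symm
        refine Finset.sum_eq_zero fun b _ => ?_
        have hne : i ≠ Fin.castLE hkh b := by
          intro hcon
          apply hi
          rw [hcon]
          exact b.2
        simp [hsb, eIdx, Pi.single_apply, hne]
    have hsS : s = ∑ b : Fin k, s.1 (eIdx h k hkh b) • sb b := by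
      apply Subtype.ext
      conv_lhs => rw [hs]
      push_cast [Submodule.coe_sum]
      rfl
    funext a
    show (∑ b : Fin k, (X (eIdx h k hkh b) * s.1 (cIdx h q k hkh hdim a b)
        - X (cIdx h q k hkh hdim a b) * s.1 (eIdx h k hkh b))) = φ s a
    conv_rhs => rw [hsS]
    rw [map_sum]
    rw [Finset.sum_apply]
    refine Finset.sum_congr rfl fun b _ => ?_
    rw [hXe b, hXc a b]
    simp [map_smul, mul_comm]
end

section
/- Let V and W be finite-dimensional real vector spaces and let N ≥ 1 be an integer. For p, ℓ ≥ 0 let M_{p,ℓ} denote the space of (p+ℓ)-multilinear maps V^{p+ℓ} → W that are symmetric in the first p arguments and alternating in the last ℓ arguments. Let ι : M_{N+2,0} → M_{N+1,1} be the natural inclusion (a fully symmetric map is in particular symmetric in the first N+1 arguments). Define 𝒜 : M_{N+1,1} → M_{N,2} by (𝒜T)(v₁,…,v_{N+2}) = T(v₁,…,v_N, v_{N+2}, v_{N+1}) − T(v₁,…,v_N, v_{N+1}, v_{N+2}), and define 𝒞 : M_{N,2} → M_{N−1,3} by (𝒞b)(v₁,…,v_{N+2}) = b(v₁,…,v_{N+2})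 + b(v₁,…,v_{N−1}, v_{N+1}, v_{N+2}, v_N) + b(v₁,…,v_{N−1}, v_{N+2}, v_N, v_{N+1}). Then 𝒜 and 𝒞 are well defined, the sequence 0 → M_{N+2,0} →ι M_{N+1,1} →𝒜 M_{N,2} →𝒞 M_{N−1,3} is a complex (𝒜 ∘ ι = 0 and 𝒞 ∘ 𝒜 = 0), and it is exact: ker 𝒜 = im ι and ker 𝒞 = im 𝒜. -/
open MultilinearMap

/-- The space of multilinear maps `V^{N+2} → W`. -/
abbrev MLMap (V W : Type*) [AddCommGroup V] [Module ℝ V] [AddCommGroup W] [Module ℝ W]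
    (N : ℕ) := MultilinearMap ℝ (fun _ : Fin (N + 2) => V) W

/-- `T` is symmetric in the arguments with index `< p`. -/
def SymFirst {V W : Type*} [AddCommGroup V] [Module ℝ V] [AddCommGroup W] [Module ℝ W]
    {N : ℕ} (p : ℕ) (T : MLMap V W N) : Prop :=
  ∀ (v : Fin (N + 2) → V) (i j : Fin (N + 2)), (i : ℕ) < p → (j : ℕ) < p →
    T (v ∘ Equiv.swap i j) = T v

/-- `T` is alternating in the arguments with index `≥ p`
(it vanishes whenever two of those arguments coincide). -/
def AltLast {V W : Type*} [AddCommGroup V] [Module ℝ V] [AddCommGroup W] [Module ℝ W]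
    {N : ℕ} (p : ℕ) (T : MLMap V W N) : Prop :=
  ∀ (v : Fin (N + 2) → V) (i j : Fin (N + 2)), p ≤ (i : ℕ) → p ≤ (j : ℕ) → i ≠ j →
    v i = v j → T v = 0

/-- The skew-symmetrization operator `𝒜` in the last two arguments:
`(𝒜T)(v₁,…,v_{N+2}) = T(v₁,…,v_N,v_{N+2},v_{N+1}) − T(v₁,…,v_N,v_{N+1},v_{N+2})`. -/
def AOp {V W : Type*} [AddCommGroup V] [Module ℝ V] [AddCommGroup W] [Module ℝ W]
    {N : ℕ} (T : MLMap V W N) : MLMap V W N :=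
  T.domDomCongr (Equiv.swap (⟨N, by omega⟩ : Fin (N + 2)) (⟨N + 1, by omega⟩ : Fin (N + 2))) - T

/-- The 3-cycle `N-1 ↦ N ↦ N+1 ↦ N-1` on the last three argument slots. -/
def cyc3 (N : ℕ) : Equiv.Perm (Fin (N + 2)) :=
  (Equiv.swap (⟨N, by omega⟩ : Fin (N + 2)) (⟨N + 1, by omega⟩ : Fin (N + 2))).trans
    (Equiv.swap (⟨N - 1, by omega⟩ : Fin (N + 2)) (⟨N, by omega⟩ : Fin (N + 2)))

/-- The cyclic sum operator `𝒞` over the last three arguments: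
`(𝒞b)(v₁,…,v_{N+2}) = b(v₁,…,v_{N+2}) + b(v₁,…,v_{N−1},v_{N+1},v_{N+2},v_N)
  + b(v₁,…,v_{N−1},v_{N+2},v_N,v_{N+1})`. -/
def COp {V W : Type*} [AddCommGroup V] [Module ℝ V] [AddCommGroup W] [Module ℝ W]
    {N : ℕ} (T : MLMap V W N) : MLMap V W N :=
  T + T.domDomCongr (cyc3 N) + T.domDomCongr (cyc3 N).symm

namespace KoszulAux

/-- index `N-1` -/
def nmF (N : ℕ) : Fin (N + 2) := ⟨N - 1, by omega⟩
/-- index `N` -/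
def nnF (N : ℕ) : Fin (N + 2) := ⟨N, by omega⟩
/-- index `N+1` -/
def n1F (N : ℕ) : Fin (N + 2) := ⟨N + 1, by omega⟩
/-- the transposition of the last two slots -/
def tauF (N : ℕ) : Equiv.Perm (Fin (N + 2)) := Equiv.swap (nnF N) (n1F N)

lemma nm_ne_nn (N : ℕ) (hN : 1 ≤ N) : nmF N ≠ nnF N :=
  Fin.ne_of_val_ne (by show N - 1 ≠ N; omega)

lemma nm_ne_n1 (N : ℕ) : nmF N ≠ n1F N :=
  Fin.ne_of_val_ne (by show N - 1 ≠ N + 1; omega)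

lemma nn_ne_n1 (N : ℕ) : nnF N ≠ n1F N :=
  Fin.ne_of_val_ne (by show N ≠ N + 1; omega)

lemma mem1 {N : ℕ} (k : Fin (N + 2)) (h : N + 1 ≤ (k : ℕ)) : k = n1F N := by
  have := k.isLt
  apply Fin.ext
  simp only [n1F]
  omega

lemma mem2 {N : ℕ} (k : Fin (N + 2)) (h : N ≤ (k : ℕ)) : k = nnF N ∨ k = n1F N := by
  have := k.isLt
  rcases Nat.lt_or_ge (k : ℕ) (N + 1) with h1 | h1
  · left; apply Fin.ext; simp only [nnF]; omega
  · right; apply Fin.ext; simp only [n1F]; omega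

lemma mem3 {N : ℕ} (hN : 1 ≤ N) (k : Fin (N + 2)) (h : N - 1 ≤ (k : ℕ)) :
    k = nmF N ∨ k = nnF N ∨ k = n1F N := by
  have := k.isLt
  rcases Nat.lt_or_ge (k : ℕ) N with h1 | h1
  · left; apply Fin.ext; simp only [nmF]; omega
  · rcases Nat.lt_or_ge (k : ℕ) (N + 1) with h2 | h2
    · right; left; apply Fin.ext; simp only [nnF]; omega
    · right; right; apply Fin.ext; simp only [n1F]; omega

lemma tau_nn (N : ℕ) : tauF N (nnF N) = n1F N := Equiv.swap_apply_left _ _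
lemma tau_n1 (N : ℕ) : tauF N (n1F N) = nnF N := Equiv.swap_apply_right _ _
lemma tau_nm (N : ℕ) (hN : 1 ≤ N) : tauF N (nmF N) = nmF N :=
  Equiv.swap_apply_of_ne_of_ne (nm_ne_nn N hN) (nm_ne_n1 N)
lemma tau_fix {N : ℕ} (k : Fin (N + 2)) (h2 : k ≠ nnF N) (h3 : k ≠ n1F N) :
    tauF N k = k := Equiv.swap_apply_of_ne_of_ne h2 h3

lemma cyc3_eq (N : ℕ) : cyc3 N = (tauF N).trans (Equiv.swap (nmF N) (nnF N)) := rfl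

lemma cyc3_nm (N : ℕ) (hN : 1 ≤ N) : cyc3 N (nmF N) = nnF N := by
  rw [cyc3_eq, Equiv.trans_apply, tau_nm N hN, Equiv.swap_apply_left]

lemma cyc3_nn (N : ℕ) : cyc3 N (nnF N) = n1F N := by
  rw [cyc3_eq, Equiv.trans_apply, tau_nn,
    Equiv.swap_apply_of_ne_of_ne (Ne.symm (nm_ne_n1 N)) (Ne.symm (nn_ne_n1 N))]

lemma cyc3_n1 (N : ℕ) : cyc3 N (n1F N) = nmF N := by
  rw [cyc3_eq, Equiv.trans_apply, tau_n1, Equiv.swap_apply_right]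

lemma cyc3_fix {N : ℕ} (k : Fin (N + 2)) (h1 : k ≠ nmF N) (h2 : k ≠ nnF N)
    (h3 : k ≠ n1F N) : cyc3 N k = k := by
  rw [cyc3_eq, Equiv.trans_apply, tau_fix k h2 h3, Equiv.swap_apply_of_ne_of_ne h1 h2]

lemma cyc3s_nm (N : ℕ) : (cyc3 N).symm (nmF N) = n1F N := by
  rw [Equiv.symm_apply_eq, cyc3_n1]

lemma cyc3s_nn (N : ℕ) (hN : 1 ≤ N) : (cyc3 N).symm (nnF N) = nmF N := by
  rw [Equiv.symm_apply_eq, cyc3_nm N hN]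

lemma cyc3s_n1 (N : ℕ) : (cyc3 N).symm (n1F N) = nnF N := by
  rw [Equiv.symm_apply_eq, cyc3_nn]

lemma cyc3s_fix {N : ℕ} (k : Fin (N + 2)) (h1 : k ≠ nmF N) (h2 : k ≠ nnF N)
    (h3 : k ≠ n1F N) : (cyc3 N).symm k = k := by
  rw [Equiv.symm_apply_eq, cyc3_fix k h1 h2 h3]

section Maps
variable {V W : Type*} [AddCommGroup V] [Module ℝ V] [AddCommGroup W] [Module ℝ W] {N : ℕ}

lemma AOp_apply (T : MLMap V W N) (w : Fin (N + 2) → V) :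
    AOp T w = T (w ∘ ⇑(tauF N)) - T w := rfl

lemma COp_apply (T : MLMap V W N) (w : Fin (N + 2) → V) :
    COp T w = T w + T (w ∘ ⇑(cyc3 N)) + T (w ∘ ⇑(cyc3 N).symm) := rfl

lemma symFirst_perm {p : ℕ} {T : MLMap V W N} (hT : SymFirst p T)
    (π : Equiv.Perm (Fin (N + 2))) (hπ : ∀ k : Fin (N + 2), p ≤ (k : ℕ) → π k = k)
    (v : Fin (N + 2) → V) : T (v ∘ π) = T v := by
  suffices H : ∀ (n : ℕ) (π : Equiv.Perm (Fin (N + 2))),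
      (Finset.univ.filter fun k => π k ≠ k).card ≤ n →
      (∀ k : Fin (N + 2), p ≤ (k : ℕ) → π k = k) →
      ∀ v : Fin (N + 2) → V, T (v ∘ π) = T v from H _ π le_rfl hπ v
  intro n
  induction n with
  | zero =>
    intro π hcard hπ v
    have hfix : ∀ k, π k = k := by
      intro k
      by_contra hk
      have hmem : k ∈ Finset.univ.filter fun k => π k ≠ k := by simp [hk]
      rw [Finset.card_eq_zero.mp (Nat.le_zero.mp hcard)] at hmem
      exact absurd hmem (Finset.notMem_empty k)
    have : v ∘ π = v := funext fun k => by rw [Function.comp_apply, hfix]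
    rw [this]
  | succ n ih =>
    intro π hcard hπ v
    by_cases h1 : ∀ k, π k = k
    · have : v ∘ π = v := funext fun k => by rw [Function.comp_apply, h1]
      rw [this]
    · push_neg at h1
      obtain ⟨k₀, hk₀⟩ := h1
      have hk₀p : (k₀ : ℕ) < p := by
        by_contra h; exact hk₀ (hπ k₀ (not_lt.mp h))
      have hπk₀p : ((π k₀ : Fin (N + 2)) : ℕ) < p := by
        by_contra h
        exact hk₀ (π.injective (hπ (π k₀) (not_lt.mp h)))
      set s := Equiv.swap k₀ (π k₀) with hs
      set π' := π.trans s with hπ'def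
      have hπ'fix : ∀ k : Fin (N + 2), p ≤ (k : ℕ) → π' k = k := by
        intro k hk
        have h1 : π k = k := hπ k hk
        have h2 : k ≠ k₀ := by rintro rfl; omega
        have h3 : k ≠ π k₀ := by rintro rfl; omega
        simp [hπ'def, Equiv.trans_apply, h1, hs, Equiv.swap_apply_of_ne_of_ne h2 h3]
      have hsub : (Finset.univ.filter fun k => π' k ≠ k) ⊆
          (Finset.univ.filter fun k => π k ≠ k).erase k₀ := by
        intro k hk
        simp only [Finset.mem_filter, Finset.mem_univ, true_and] at hk
        rw [Finset.mem_erase]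
        constructor
        · rintro rfl
          exact hk (by simp [hπ'def, hs, Equiv.trans_apply])
        · simp only [Finset.mem_filter, Finset.mem_univ, true_and]
          intro hfk
          apply hk
          have h3 : k ≠ π k₀ := by
            rintro rfl
            exact hk₀ (π.injective hfk)
          have h2 : k ≠ k₀ := by
            rintro rfl
            exact hk₀ hfk
          simp [hπ'def, Equiv.trans_apply, hfk, hs, Equiv.swap_apply_of_ne_of_ne h2 h3]
      have hcard' : (Finset.univ.filter fun k => π' k ≠ k).card ≤ n := by
        have hmem : k₀ ∈ Finset.univ.filter fun k => π k ≠ k := by simp [hk₀]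
        have := Finset.card_le_card hsub
        rw [Finset.card_erase_of_mem hmem] at this
        omega
      have hv : v ∘ π = (v ∘ s) ∘ π' := by
        funext k
        simp [hπ'def, Equiv.trans_apply, hs, Equiv.swap_apply_self]
      rw [hv, ih π' hcard' hπ'fix, hT v k₀ (π k₀) hk₀p hπk₀p]

lemma symFirst_congr {p : ℕ} {T : MLMap V W N} (hT : SymFirst p T)
    (π₁ π₂ : Equiv.Perm (Fin (N + 2))) (h : ∀ k : Fin (N + 2), p ≤ (k : ℕ) → π₁ k = π₂ k)
    (v : Fin (N + 2) → V) : T (v ∘ π₁) = T (v ∘ π₂) := by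
  have hρ : ∀ k : Fin (N + 2), p ≤ (k : ℕ) → (π₁.trans π₂.symm) k = k := by
    intro k hk
    simp [Equiv.trans_apply, h k hk]
  have := symFirst_perm hT (π₁.trans π₂.symm) hρ (v ∘ π₂)
  have he : (v ∘ π₂) ∘ (π₁.trans π₂.symm) = v ∘ π₁ := by
    funext k; simp [Equiv.trans_apply]
  rwa [he] at this

lemma altLast_tau {T : MLMap V W N} (hT : AltLast N T) (v : Fin (N + 2) → V) :
    T (v ∘ ⇑(tauF N)) = - T v := by
  have hne : nnF N ≠ n1F N := nn_ne_n1 N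
  set a := v (nnF N) with ha
  set b := v (n1F N) with hb
  have key : ∀ x y : V,
      T (Function.update (Function.update v (nnF N) (a + b)) (n1F N) (x + y))
      = T (Function.update (Function.update v (nnF N) a) (n1F N) (x + y))
        + T (Function.update (Function.update v (nnF N) b) (n1F N) (x + y)) := by
    intro x y
    rw [Function.update_comm hne, T.map_update_add, ← Function.update_comm hne,
      ← Function.update_comm hne]
  have h0 : T (Function.update (Function.update v (nnF N) (a + b)) (n1F N) (a + b)) = 0 := by
    apply hT _ (nnF N) (n1F N) le_rfl (by simp [n1F]) hne
    rw [Function.update_of_ne hne, Function.update_self, Function.update_self]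
  rw [key, T.map_update_add, T.map_update_add] at h0
  have z1 : T (Function.update (Function.update v (nnF N) a) (n1F N) a) = 0 := by
    apply hT _ (nnF N) (n1F N) le_rfl (by simp [n1F]) hne
    rw [Function.update_of_ne hne, Function.update_self, Function.update_self]
  have z2 : T (Function.update (Function.update v (nnF N) b) (n1F N) b) = 0 := by
    apply hT _ (nnF N) (n1F N) le_rfl (by simp [n1F]) hne
    rw [Function.update_of_ne hne, Function.update_self, Function.update_self]
  have e1 : Function.update (Function.update v (nnF N) a) (n1F N) b = v := by
    rw [ha, hb, Function.update_eq_self, Function.update_eq_self]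
  have e2 : Function.update (Function.update v (nnF N) b) (n1F N) a = v ∘ ⇑(tauF N) := by
    funext k
    rcases eq_or_ne k (n1F N) with rfl | hk1
    · simp only [Function.update_self, Function.comp_apply, tauF, Equiv.swap_apply_right, ha]
    · rcases eq_or_ne k (nnF N) with rfl | hk2
      · simp only [Function.update_of_ne hne, Function.update_self, Function.comp_apply,
          tauF, Equiv.swap_apply_left, hb]
      · simp only [Function.update_of_ne hk1, Function.update_of_ne hk2, Function.comp_apply,
          tauF, Equiv.swap_apply_of_ne_of_ne hk2 hk1]
  rw [e1, e2, z1, z2] at h0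
  have hsum : T (v ∘ ⇑(tauF N)) + T v = 0 := by
    rw [← h0]; abel
  exact eq_neg_of_add_eq_zero_left hsum

end Maps

end KoszulAux

set_option maxHeartbeats 2000000 in
open KoszulAux in
/-- The degree-`N` homogeneous part of the polynomial de Rham complex,
`0 → M_{N+2,0} → M_{N+1,1} →𝒜 M_{N,2} →𝒞 M_{N−1,3}`, is a well-defined exact complex:
`𝒜` maps `M_{N+1,1}` to `M_{N,2}`, `𝒞` maps `M_{N,2}` to `M_{N−1,3}`, `𝒜 ∘ ι = 0`,
`𝒞 ∘ 𝒜 = 0`, `ker 𝒜 = im ι` and `ker 𝒞 = im 𝒜`. -/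
theorem koszul_sequence_exact (V W : Type*)
    [AddCommGroup V] [Module ℝ V] [FiniteDimensional ℝ V]
    [AddCommGroup W] [Module ℝ W] [FiniteDimensional ℝ W]
    (N : ℕ) (hN : 1 ≤ N) :
    -- 𝒜 is well defined from `M_{N+1,1}` to `M_{N,2}`
    (∀ T : MLMap V W N, SymFirst (N + 1) T → SymFirst N (AOp T) ∧ AltLast N (AOp T)) ∧
    -- 𝒞 is well defined from `M_{N,2}` to `M_{N−1,3}`
    (∀ T : MLMap V W N, SymFirst N T → AltLast N T →
      SymFirst (N - 1) (COp T) ∧ AltLast (N - 1) (COp T)) ∧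
    -- `𝒜 ∘ ι = 0` : fully symmetric maps are killed by `𝒜`
    (∀ T : MLMap V W N, SymFirst (N + 2) T → AOp T = 0) ∧
    -- `𝒞 ∘ 𝒜 = 0`
    (∀ T : MLMap V W N, SymFirst (N + 1) T → COp (AOp T) = 0) ∧
    -- `ker 𝒜 = im ι` : a member of `M_{N+1,1}` killed by `𝒜` is fully symmetric
    (∀ T : MLMap V W N, SymFirst (N + 1) T → AOp T = 0 → SymFirst (N + 2) T) ∧
    -- `ker 𝒞 = im 𝒜`
    (∀ T : MLMap V W N, SymFirst N T → AltLast N T → COp T = 0 →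
      ∃ T' : MLMap V W N, SymFirst (N + 1) T' ∧ AOp T' = T) := by
  refine ⟨?_, ?_, ?_, ?_, ?_, ?_⟩
  -- Part 1 : 𝒜 well defined
  · intro T hT
    constructor
    · intro v i j hi hj
      rw [AOp_apply, AOp_apply]
      have e1 : (v ∘ ⇑(Equiv.swap i j)) ∘ ⇑(tauF N)
          = v ∘ ⇑((tauF N).trans (Equiv.swap i j)) := rfl
      rw [e1]
      have e2 : T (v ∘ ⇑((tauF N).trans (Equiv.swap i j))) = T (v ∘ ⇑(tauF N)) := by
        apply symFirst_congr hT
        intro k hk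
        rw [mem1 k hk, Equiv.trans_apply, tau_n1,
          Equiv.swap_apply_of_ne_of_ne (by simp [nnF, Fin.ext_iff]; omega)
            (by simp [nnF, Fin.ext_iff]; omega)]
      rw [e2, hT v i j (by omega) (by omega)]
    · intro v i j hi hj hij heq
      obtain rfl | rfl := mem2 i hi <;> obtain rfl | rfl := mem2 j hj
      · exact absurd rfl hij
      all_goals try exact absurd rfl hij
      all_goals {
        rw [AOp_apply]
        have hveq : v (nnF N) = v (n1F N) := by
          first | exact heq | exact heq.symm
        have hvt : v ∘ ⇑(tauF N) = v := by
          funext k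
          rcases eq_or_ne k (nnF N) with rfl | h1
          · rw [Function.comp_apply, tau_nn]; exact hveq.symm
          rcases eq_or_ne k (n1F N) with rfl | h2
          · rw [Function.comp_apply, tau_n1]; exact hveq
          · rw [Function.comp_apply, tau_fix k h1 h2]
        rw [hvt, sub_self]
      }
  -- Part 2 : 𝒞 well defined
  · intro T hT hA
    constructor
    · intro v i j hi hj
      rw [COp_apply, COp_apply]
      have hin1 : (n1F N : ℕ) ≠ (i : ℕ) := by simp [n1F]; omega
      have hjn1 : (n1F N : ℕ) ≠ (j : ℕ) := by simp [n1F]; omega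
      have hinm : (nmF N : ℕ) ≠ (i : ℕ) := by simp [nmF]; omega
      have hjnm : (nmF N : ℕ) ≠ (j : ℕ) := by simp [nmF]; omega
      have e0 : T (v ∘ ⇑(Equiv.swap i j)) = T v := hT v i j (by omega) (by omega)
      have e1 : T ((v ∘ ⇑(Equiv.swap i j)) ∘ ⇑(cyc3 N)) = T (v ∘ ⇑(cyc3 N)) := by
        have h : (v ∘ ⇑(Equiv.swap i j)) ∘ ⇑(cyc3 N)
            = v ∘ ⇑((cyc3 N).trans (Equiv.swap i j)) := rfl
        rw [h]
        apply symFirst_congr hT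
        intro k hk
        obtain rfl | rfl := mem2 k hk
        · rw [Equiv.trans_apply, cyc3_nn,
            Equiv.swap_apply_of_ne_of_ne (Fin.ne_of_val_ne hin1) (Fin.ne_of_val_ne hjn1)]
        · rw [Equiv.trans_apply, cyc3_n1,
            Equiv.swap_apply_of_ne_of_ne (Fin.ne_of_val_ne hinm) (Fin.ne_of_val_ne hjnm)]
      have e2 : T ((v ∘ ⇑(Equiv.swap i j)) ∘ ⇑(cyc3 N).symm) = T (v ∘ ⇑(cyc3 N).symm) := by
        have h : (v ∘ ⇑(Equiv.swap i j)) ∘ ⇑(cyc3 N).symm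
            = v ∘ ⇑((cyc3 N).symm.trans (Equiv.swap i j)) := rfl
        rw [h]
        apply symFirst_congr hT
        intro k hk
        obtain rfl | rfl := mem2 k hk
        · rw [Equiv.trans_apply, cyc3s_nn N hN,
            Equiv.swap_apply_of_ne_of_ne (Fin.ne_of_val_ne hinm) (Fin.ne_of_val_ne hjnm)]
        · rw [Equiv.trans_apply, cyc3s_n1,
            Equiv.swap_apply_of_ne_of_ne (Fin.ne_of_val_ne (show N ≠ (i:ℕ) by omega))
              (Fin.ne_of_val_ne (show N ≠ (j:ℕ) by omega))]
      rw [e0, e1, e2]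
    · intro v i j hi hj hij heq
      rw [COp_apply]
      have C1 : v (nnF N) = v (n1F N) →
          T v + T (v ∘ ⇑(cyc3 N)) + T (v ∘ ⇑(cyc3 N).symm) = 0 := by
        intro h
        have z : T v = 0 :=
          hA v (nnF N) (n1F N) (by show N ≤ N; omega) (by show N ≤ N + 1; omega) (nn_ne_n1 N) h
        have hfe : v ∘ ⇑(cyc3 N).symm = (v ∘ ⇑(cyc3 N)) ∘ ⇑(tauF N) := by
          funext k
          simp only [Function.comp_apply]
          rcases eq_or_ne k (nmF N) with rfl | h1
          · rw [cyc3s_nm, tau_nm N hN, cyc3_nm N hN]; exact h.symm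
          rcases eq_or_ne k (nnF N) with rfl | h2
          · rw [cyc3s_nn N hN, tau_nn, cyc3_n1]
          rcases eq_or_ne k (n1F N) with rfl | h3
          · rw [cyc3s_n1, tau_n1, cyc3_nn]; exact h
          · rw [cyc3s_fix k h1 h2 h3, tau_fix k h2 h3, cyc3_fix k h1 h2 h3]
        rw [z, hfe, altLast_tau hA (v ∘ ⇑(cyc3 N))]
        abel
      have C2 : v (nmF N) = v (nnF N) →
          T v + T (v ∘ ⇑(cyc3 N)) + T (v ∘ ⇑(cyc3 N).symm) = 0 := by
        intro h
        have z : T (v ∘ ⇑(cyc3 N).symm) = 0 := by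
          apply hA _ (nnF N) (n1F N) (by show N ≤ N; omega) (by show N ≤ N + 1; omega) (nn_ne_n1 N)
          simp only [Function.comp_apply]
          rw [cyc3s_nn N hN, cyc3s_n1]
          exact h
        have hfe : v ∘ ⇑(cyc3 N) = v ∘ ⇑(tauF N) := by
          funext k
          simp only [Function.comp_apply]
          rcases eq_or_ne k (nmF N) with rfl | h1
          · rw [cyc3_nm N hN, tau_nm N hN]; exact h.symm
          rcases eq_or_ne k (nnF N) with rfl | h2
          · rw [cyc3_nn, tau_nn]
          rcases eq_or_ne k (n1F N) with rfl | h3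
          · rw [cyc3_n1, tau_n1]; exact h
          · rw [cyc3_fix k h1 h2 h3, tau_fix k h2 h3]
        rw [z, hfe, altLast_tau hA v]
        abel
      have C3 : v (nmF N) = v (n1F N) →
          T v + T (v ∘ ⇑(cyc3 N)) + T (v ∘ ⇑(cyc3 N).symm) = 0 := by
        intro h
        have z : T (v ∘ ⇑(cyc3 N)) = 0 := by
          apply hA _ (nnF N) (n1F N) (by show N ≤ N; omega) (by show N ≤ N + 1; omega) (nn_ne_n1 N)
          simp only [Function.comp_apply]
          rw [cyc3_nn, cyc3_n1]
          exact h.symm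
        have hfe : v ∘ ⇑(cyc3 N).symm = v ∘ ⇑(tauF N) := by
          funext k
          simp only [Function.comp_apply]
          rcases eq_or_ne k (nmF N) with rfl | h1
          · rw [cyc3s_nm, tau_nm N hN]; exact h.symm
          rcases eq_or_ne k (nnF N) with rfl | h2
          · rw [cyc3s_nn N hN, tau_nn]; exact h
          rcases eq_or_ne k (n1F N) with rfl | h3
          · rw [cyc3s_n1, tau_n1]
          · rw [cyc3s_fix k h1 h2 h3, tau_fix k h2 h3]
        rw [z, hfe, altLast_tau hA v]
        abel
      obtain rfl | rfl | rfl := mem3 hN i hi <;> obtain rfl | rfl | rfl := mem3 hN j hj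
      · exact absurd rfl hij
      · exact C2 heq
      · exact C3 heq
      · exact C2 heq.symm
      · exact absurd rfl hij
      · exact C1 heq
      · exact C3 heq.symm
      · exact C1 heq.symm
      · exact absurd rfl hij
  -- Part 3 : 𝒜 ∘ ι = 0
  · intro T hT
    ext v
    rw [AOp_apply, MultilinearMap.zero_apply, sub_eq_zero]
    exact hT v (nnF N) (n1F N) (by show N < N + 2; omega) (by show N + 1 < N + 2; omega)
  -- Part 4 : 𝒞 ∘ 𝒜 = 0
  · intro T hT
    ext v
    rw [COp_apply, AOp_apply, AOp_apply, AOp_apply, MultilinearMap.zero_apply]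
    have e1 : T ((v ∘ ⇑(cyc3 N)) ∘ ⇑(tauF N)) = T v := by
      have h : (v ∘ ⇑(cyc3 N)) ∘ ⇑(tauF N) = v ∘ ⇑((tauF N).trans (cyc3 N)) := rfl
      rw [h]
      have h2 := symFirst_congr hT ((tauF N).trans (cyc3 N)) (Equiv.refl _)
        (fun k hk => by rw [mem1 k hk, Equiv.trans_apply, tau_n1, cyc3_nn, Equiv.refl_apply]) v
      simpa using h2
    have e2 : T (v ∘ ⇑(cyc3 N).symm) = T (v ∘ ⇑(tauF N)) :=
      symFirst_congr hT _ _
        (fun k hk => by rw [mem1 k hk, cyc3s_n1, tau_n1]) v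
    have e3 : T ((v ∘ ⇑(cyc3 N).symm) ∘ ⇑(tauF N)) = T (v ∘ ⇑(cyc3 N)) := by
      have h : (v ∘ ⇑(cyc3 N).symm) ∘ ⇑(tauF N) = v ∘ ⇑((tauF N).trans (cyc3 N).symm) := rfl
      rw [h]
      exact symFirst_congr hT _ _
        (fun k hk => by rw [mem1 k hk, Equiv.trans_apply, tau_n1, cyc3s_nn N hN, cyc3_n1]) v
    rw [e1, e2, e3]
    abel
  -- Part 5 : ker 𝒜 ⊆ im ι
  · intro T hT h0 v i j hi hj
    have hτ0 : ∀ w : Fin (N + 2) → V, T (w ∘ ⇑(tauF N)) = T w := by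
      intro w
      have h := DFunLike.congr_fun h0 w
      rw [AOp_apply, MultilinearMap.zero_apply, sub_eq_zero] at h
      exact h
    have main : ∀ m : Fin (N + 2), (m : ℕ) < N + 1 →
        T (v ∘ ⇑(Equiv.swap m (n1F N))) = T v := by
      intro m hm
      by_cases hmN : (m : ℕ) = N
      · have : m = nnF N := Fin.ext (by simp [nnF, hmN])
        subst this
        exact hτ0 v
      · have hmN' : (m : ℕ) < N := by omega
        have hperm : v ∘ ⇑(Equiv.swap m (n1F N))
            = (((v ∘ ⇑(Equiv.swap m (nnF N))) ∘ ⇑(tauF N)) ∘ ⇑(Equiv.swap m (nnF N))) := by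
          funext k
          simp only [Function.comp_apply]
          congr 1
          have hmnn : m ≠ nnF N := Fin.ne_of_val_ne (by show (m : ℕ) ≠ N; omega)
          have hmn1 : m ≠ n1F N := Fin.ne_of_val_ne (by show (m : ℕ) ≠ N + 1; omega)
          rcases eq_or_ne k m with rfl | h1
          · rw [Equiv.swap_apply_left, Equiv.swap_apply_left, tau_nn,
              Equiv.swap_apply_of_ne_of_ne (Ne.symm hmn1) (Ne.symm (nn_ne_n1 N))]
          rcases eq_or_ne k (n1F N) with rfl | h2
          · rw [Equiv.swap_apply_right,
              Equiv.swap_apply_of_ne_of_ne (Ne.symm hmn1) (Ne.symm (nn_ne_n1 N)),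
              tau_n1, Equiv.swap_apply_right]
          rcases eq_or_ne k (nnF N) with rfl | h3
          · rw [Equiv.swap_apply_of_ne_of_ne (Ne.symm hmnn) (nn_ne_n1 N),
              Equiv.swap_apply_right, tau_fix m hmnn hmn1, Equiv.swap_apply_left]
          · rw [Equiv.swap_apply_of_ne_of_ne h1 h2, Equiv.swap_apply_of_ne_of_ne h1 h3,
              tau_fix k h3 h2, Equiv.swap_apply_of_ne_of_ne h1 h3]
        rw [hperm]
        rw [hT ((v ∘ ⇑(Equiv.swap m (nnF N))) ∘ ⇑(tauF N)) m (nnF N) (by omega)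
          (by show N < N + 1; omega)]
        rw [hτ0 (v ∘ ⇑(Equiv.swap m (nnF N)))]
        exact hT v m (nnF N) (by omega) (by show N < N + 1; omega)
    by_cases hi' : (i : ℕ) < N + 1
    · by_cases hj' : (j : ℕ) < N + 1
      · exact hT v i j hi' hj'
      · have hj1 : j = n1F N := mem1 j (by omega)
        subst hj1
        exact main i hi'
    · have hi1 : i = n1F N := mem1 i (by omega)
      subst hi1
      by_cases hj' : (j : ℕ) < N + 1
      · rw [Equiv.swap_comm]
        exact main j hj'
      · have hj1 : j = n1F N := mem1 j (by omega)
        subst hj1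
        rw [Equiv.swap_self]
        simp
  -- Part 6 : ker 𝒞 ⊆ im 𝒜
  · intro T hT hA hc
    set c : ℝ := ((N : ℝ) + 2)⁻¹ with hcdef
    set σf : Fin (N + 1) → Equiv.Perm (Fin (N + 2)) :=
      fun i => (tauF N).trans (Equiv.swap i.castSucc (nnF N)) with hσf
    have happ : ∀ w : Fin (N + 2) → V,
        (c • ∑ i : Fin (N + 1), T.domDomCongr (σf i)) w
          = c • ∑ i : Fin (N + 1), T (w ∘ ⇑(σf i)) := by
      intro w
      rw [MultilinearMap.smul_apply, MultilinearMap.sum_apply]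
      rfl
    have hσnn : ∀ i : Fin (N + 1), σf i (nnF N) = n1F N := by
      intro i
      rw [hσf]
      simp only [Equiv.trans_apply]
      rw [tau_nn, Equiv.swap_apply_of_ne_of_ne
        (Fin.ne_of_val_ne (by simp [n1F]; have := i.isLt; omega))
        (Ne.symm (nn_ne_n1 N))]
    have hσn1 : ∀ i : Fin (N + 1), σf i (n1F N) = i.castSucc := by
      intro i
      rw [hσf]
      simp only [Equiv.trans_apply]
      rw [tau_n1, Equiv.swap_apply_right]
    refine ⟨c • ∑ i : Fin (N + 1), T.domDomCongr (σf i), ?_, ?_⟩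
    · intro v a b ha hb
      rw [happ, happ]
      congr 1
      refine Fintype.sum_equiv (Equiv.swap (⟨a, ha⟩ : Fin (N + 1)) ⟨b, hb⟩) _ _ ?_
      intro i
      have h : (v ∘ ⇑(Equiv.swap a b)) ∘ ⇑(σf i)
          = v ∘ ⇑((σf i).trans (Equiv.swap a b)) := rfl
      rw [h]
      apply symFirst_congr hT
      intro k hk
      obtain rfl | rfl := mem2 k hk
      · rw [Equiv.trans_apply, hσnn,
          Equiv.swap_apply_of_ne_of_ne (Fin.ne_of_val_ne (by show N + 1 ≠ (a : ℕ); omega))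
            (Fin.ne_of_val_ne (by show N + 1 ≠ (b : ℕ); omega)),
          hσnn]
      · rw [Equiv.trans_apply, hσn1, hσn1]
        apply Fin.ext
        simp only [Equiv.swap_apply_def, Fin.coe_castSucc, Fin.ext_iff]
        split_ifs <;> simp_all <;> omega
    · ext v
      rw [AOp_apply, happ, happ, ← smul_sub, ← Finset.sum_sub_distrib]
      have hNterm : ∀ j : Fin N,
          T ((v ∘ ⇑(tauF N)) ∘ ⇑(σf j.castSucc)) - T (v ∘ ⇑(σf j.castSucc)) = T v := by
        intro j
        set i : Fin (N + 1) := j.castSucc with hidef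
        set i2 : Fin (N + 2) := i.castSucc with hi2def
        have hi2v : (i2 : ℕ) = (j : ℕ) := by simp [hi2def, hidef]
        have hi2N : (i2 : ℕ) < N := by rw [hi2v]; exact j.isLt
        have hi2nm : i2 ≠ nmF N ∨ True := Or.inr trivial
        have hne_i2_nn : i2 ≠ nnF N := Fin.ne_of_val_ne (by show (i2 : ℕ) ≠ N; omega)
        have hne_i2_n1 : i2 ≠ n1F N := Fin.ne_of_val_ne (by show (i2 : ℕ) ≠ N + 1; omega)
        have hσi2 : σf i i2 = nnF N := by
          rw [hσf]
          simp only [Equiv.trans_apply]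
          rw [tau_fix i2 hne_i2_nn hne_i2_n1, ← hi2def, Equiv.swap_apply_left]
        set πA : Equiv.Perm (Fin (N + 2)) := (σf i).trans (tauF N) with hπA
        have hπA_nn : πA (nnF N) = nnF N := by
          rw [hπA, Equiv.trans_apply, hσnn, tau_n1]
        have hπA_n1 : πA (n1F N) = i2 := by
          rw [hπA, Equiv.trans_apply, hσn1, ← hi2def, tau_fix i2 hne_i2_nn hne_i2_n1]
        have hπA_i2 : πA i2 = n1F N := by
          rw [hπA, Equiv.trans_apply, hσi2, tau_nn]
        set S : Equiv.Perm (Fin (N + 2)) := Equiv.swap i2 (nmF N) with hS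
        set P1 : Equiv.Perm (Fin (N + 2)) := S.trans πA with hP1
        have hP1_nm : P1 (nmF N) = n1F N := by
          rw [hP1, Equiv.trans_apply, hS, Equiv.swap_apply_right, hπA_i2]
        have hP1_nn : P1 (nnF N) = nnF N := by
          rw [hP1, Equiv.trans_apply, hS,
            Equiv.swap_apply_of_ne_of_ne (Ne.symm hne_i2_nn) (Ne.symm (nm_ne_nn N hN)),
            hπA_nn]
        have hP1_n1 : P1 (n1F N) = i2 := by
          rw [hP1, Equiv.trans_apply, hS,
            Equiv.swap_apply_of_ne_of_ne (Ne.symm hne_i2_n1) (Ne.symm (nm_ne_n1 N)),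
            hπA_n1]
        have step0 : T (v ∘ ⇑P1) = T (v ∘ ⇑πA) := by
          apply symFirst_congr hT
          intro k hk
          obtain rfl | rfl := mem2 k hk
          · rw [hP1_nn, hπA_nn]
          · rw [hP1_n1, hπA_n1]
        have stepc : T (v ∘ ⇑P1) + T ((v ∘ ⇑P1) ∘ ⇑(cyc3 N))
            + T ((v ∘ ⇑P1) ∘ ⇑(cyc3 N).symm) = 0 := by
          have h := DFunLike.congr_fun hc (v ∘ ⇑P1)
          rw [COp_apply, MultilinearMap.zero_apply] at h
          exact h
        have step2 : T ((v ∘ ⇑P1) ∘ ⇑(cyc3 N)) = - T (v ∘ ⇑(σf i)) := by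
          have h1 := altLast_tau hA ((v ∘ ⇑P1) ∘ ⇑(cyc3 N))
          have h2 : T (((v ∘ ⇑P1) ∘ ⇑(cyc3 N)) ∘ ⇑(tauF N)) = T (v ∘ ⇑(σf i)) := by
            have h : ((v ∘ ⇑P1) ∘ ⇑(cyc3 N)) ∘ ⇑(tauF N)
                = v ∘ ⇑(((tauF N).trans (cyc3 N)).trans P1) := rfl
            rw [h]
            apply symFirst_congr hT
            intro k hk
            obtain rfl | rfl := mem2 k hk
            · simp only [Equiv.trans_apply]
              rw [tau_nn, cyc3_n1, hP1_nm, hσnn]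
            · simp only [Equiv.trans_apply]
              rw [tau_n1, cyc3_nn, hP1_n1, hσn1, hi2def]
          exact neg_eq_iff_eq_neg.mp (h1.symm.trans h2)
        have step3 : T ((v ∘ ⇑P1) ∘ ⇑(cyc3 N).symm) = - T v := by
          have h1 := altLast_tau hA ((v ∘ ⇑P1) ∘ ⇑(cyc3 N).symm)
          have h2 : T (((v ∘ ⇑P1) ∘ ⇑(cyc3 N).symm) ∘ ⇑(tauF N)) = T v := by
            have h : ((v ∘ ⇑P1) ∘ ⇑(cyc3 N).symm) ∘ ⇑(tauF N)
                = v ∘ ⇑(((tauF N).trans (cyc3 N).symm).trans P1) := rfl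
            rw [h]
            have h3 := symFirst_congr hT (((tauF N).trans (cyc3 N).symm).trans P1)
              (Equiv.refl _) ?_ v
            · simpa using h3
            · intro k hk
              obtain rfl | rfl := mem2 k hk
              · simp only [Equiv.trans_apply, Equiv.refl_apply]
                rw [tau_nn, cyc3s_n1, hP1_nn]
              · simp only [Equiv.trans_apply, Equiv.refl_apply]
                rw [tau_n1, cyc3s_nn N hN, hP1_nm]
          exact neg_eq_iff_eq_neg.mp (h1.symm.trans h2)
        have hAB : T (v ∘ ⇑πA) - T (v ∘ ⇑(σf i)) - T v = 0 := by
          rw [← step0]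
          rw [step2, step3] at stepc
          rw [← stepc]
          abel
        exact sub_eq_zero.mp hAB
      have hlast : T ((v ∘ ⇑(tauF N)) ∘ ⇑(σf (Fin.last N))) - T (v ∘ ⇑(σf (Fin.last N)))
          = T v + T v := by
        have hσlast : σf (Fin.last N) = tauF N := by
          rw [hσf]
          have hcs : (Fin.last N).castSucc = nnF N := Fin.ext (by simp [nnF])
          simp only [hcs, Equiv.swap_self]
          exact Equiv.trans_refl _
        rw [hσlast]
        have h1 : (v ∘ ⇑(tauF N)) ∘ ⇑(tauF N) = v := by
          funext k
          exact congrArg v (Equiv.swap_apply_self _ _ _)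
        rw [h1, altLast_tau hA v, sub_neg_eq_add]
      rw [Fin.sum_univ_castSucc]
      rw [Finset.sum_congr rfl fun j _ => hNterm j, hlast, Finset.sum_const,
        Finset.card_univ, Fintype.card_fin]
      have hcomb : N • T v + (T v + T v) = ((N : ℝ) + 2) • T v := by
        rw [add_smul, ← Nat.cast_smul_eq_nsmul ℝ N (T v)]
        congr 1
        rw [two_smul]
      rw [hcomb, smul_smul, hcdef, inv_mul_cancel₀ (by positivity), one_smul]
end

section
/- Let (X, d) be a metric space with a Borel measure μ, let q ∈ X and R > 0, and let B be the closed ball of center q and radius R. Let D ⊆ X be a measurable set with μ(D) = μ(B) < ∞, and let g : ℝ → ℝ≥0∞ be antitone (nonincreasing). Then ∫⁻_{p ∈ D} g(d(p, q)) dμ ≤ ∫⁻_{p ∈ B} g(d(p, q)) dμ, where ∫⁻ denotes the lower Lebesgue integral with values in ℝ≥0∞. -/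
open MeasureTheory Metric

/-- Rearrangement: among measurable sets of fixed finite measure, the integral of an
antitone function of the distance to `q` is maximized by the closed ball centered at `q`
of the same measure. -/
theorem lintegral_antitone_dist_le_ball
    {X : Type*} [MetricSpace X] [MeasurableSpace X] [OpensMeasurableSpace X]
    (μ : Measure X) (q : X) (R : ℝ) (hR : 0 < R)
    (D : Set X) (hD : MeasurableSet D)
    (hvol : μ D = μ (closedBall q R)) (hfin : μ (closedBall q R) < ⊤)
    (g : ℝ → ENNReal) (hg : Antitone g) :
    ∫⁻ p in D, g (dist p q) ∂μ ≤ ∫⁻ p in closedBall q R, g (dist p q) ∂μ := by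
  set B := closedBall q R with hB
  have hBm : MeasurableSet B := measurableSet_closedBall
  have hmeas : μ (D \ B) = μ (B \ D) := by
    have h1 : μ (D ∩ B) + μ (D \ B) = μ D := measure_inter_add_diff D hBm
    have h2 : μ (B ∩ D) + μ (B \ D) = μ B := measure_inter_add_diff B hD
    have hub : μ (D ∩ B) ≠ ⊤ := by
      refine ne_top_of_le_ne_top hfin.ne ?_
      exact measure_mono Set.inter_subset_right
    have : μ (D ∩ B) + μ (D \ B) = μ (D ∩ B) + μ (B \ D) := by
      rw [h1, hvol, ← h2, Set.inter_comm]
    exact WithTop.add_left_cancel hub this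
  have hsplitD : ∫⁻ p in D, g (dist p q) ∂μ
      = ∫⁻ p in D ∩ B, g (dist p q) ∂μ + ∫⁻ p in D \ B, g (dist p q) ∂μ := by
    rw [← lintegral_union (hD.diff hBm) (Set.disjoint_sdiff_right.mono_left Set.inter_subset_right), Set.inter_union_diff]
  have hsplitB : ∫⁻ p in B, g (dist p q) ∂μ
      = ∫⁻ p in B ∩ D, g (dist p q) ∂μ + ∫⁻ p in B \ D, g (dist p q) ∂μ := by
    rw [← lintegral_union (hBm.diff hD) (Set.disjoint_sdiff_right.mono_left Set.inter_subset_right), Set.inter_union_diff]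
  have hle1 : ∫⁻ p in D \ B, g (dist p q) ∂μ ≤ g R * μ (D \ B) := by
    calc ∫⁻ p in D \ B, g (dist p q) ∂μ ≤ ∫⁻ _ in D \ B, g R ∂μ := by
          refine setLIntegral_mono' (hD.diff hBm) (fun x hx => hg ?_)
          have : x ∉ B := hx.2
          simpa [hB, mem_closedBall, not_le] using (le_of_lt (by
            by_contra h
            exact this (by simpa [hB, mem_closedBall] using le_of_not_gt h)))
      _ = g R * μ (D \ B) := setLIntegral_const _ _
  have hle2 : g R * μ (B \ D) ≤ ∫⁻ p in B \ D, g (dist p q) ∂μ := by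
    calc g R * μ (B \ D) = ∫⁻ _ in B \ D, g R ∂μ := (setLIntegral_const _ _).symm
      _ ≤ ∫⁻ p in B \ D, g (dist p q) ∂μ := by
          refine setLIntegral_mono' (hBm.diff hD) (fun x hx => hg ?_)
          exact (mem_closedBall.mp hx.1)
  calc ∫⁻ p in D, g (dist p q) ∂μ
      = ∫⁻ p in D ∩ B, g (dist p q) ∂μ + ∫⁻ p in D \ B, g (dist p q) ∂μ := hsplitD
    _ ≤ ∫⁻ p in D ∩ B, g (dist p q) ∂μ + g R * μ (D \ B) := by gcongr
    _ = ∫⁻ p in B ∩ D, g (dist p q) ∂μ + g R * μ (B \ D) := by rw [Set.inter_comm, hmeas]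
    _ ≤ ∫⁻ p in B ∩ D, g (dist p q) ∂μ + ∫⁻ p in B \ D, g (dist p q) ∂μ := by gcongr
    _ = ∫⁻ p in B, g (dist p q) ∂μ := hsplitB.symm
end

section
/- Let (X, d) be a metric space with a Borel measure μ. Let Q > 0, let 0 < c₁ ≤ c₂ and R₀ > 0 be such that c₁ · r^Q ≤ μ(B(x, r)) ≤ c₂ · r^Q for every x ∈ X and every 0 < r ≤ R₀ (where B(x,r) is the open ball), and let λ > 1 satisfy c₁ · λ^Q ≥ c₂. Let D ⊆ X be a nonempty open set with μ(D) ≤ (1/2) · c₁ · (λ^{-1} R₀)^Q. Then there exists a countable family of pairwise disjoint balls B_j = B(x_j, r_j) with x_j ∈ D and 0 < r_j ≤ R₀ such that: (i) D ⊆ ⋃_j B(x_j, 2 r_j); (ii) μ(D ∩ B(x_j, λ^{-1} r_j)) ≥ (1/2) · μ(B(x_j, λ^{-2} r_j)) for every j; and (iii) μ(D ∩ B(x_j, r_j)) ≤ (1/2) · μ(B(x_j, λ^{-1} r_j)) for every j. -/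
open MeasureTheory Metric Set

/-- Covering lemma for the localization of the isoperimetric inequality: on a metric
measure space that is Ahlfors `Q`-regular at scales up to `R₀` (constants `c₁ ≤ c₂`),
with `λ > 1` such that `c₁ λ^Q ≥ c₂`, every nonempty open set `D` of sufficiently small
measure admits a countable disjoint family of balls `B_j = B(x_j, r_j)` with centers in
`D` and radii `≤ R₀` such that the doubled balls cover `D`,
`μ(D ∩ λ⁻¹B_j) ≥ ½ μ(λ⁻²B_j)` and `μ(D ∩ B_j) ≤ ½ μ(λ⁻¹B_j)`. -/
theorem covering_lemma_for_isoperimetry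
    {X : Type*} [MetricSpace X] [MeasurableSpace X] [OpensMeasurableSpace X]
    (μ : Measure X) (Q c₁ c₂ R₀ lam : ℝ)
    (hQ : 0 < Q) (hc₁ : 0 < c₁) (hc₁₂ : c₁ ≤ c₂) (hR₀ : 0 < R₀)
    (hlow : ∀ (x : X) (r : ℝ), 0 < r → r ≤ R₀ →
      ENNReal.ofReal (c₁ * r ^ Q) ≤ μ (ball x r))
    (hupp : ∀ (x : X) (r : ℝ), 0 < r → r ≤ R₀ →
      μ (ball x r) ≤ ENNReal.ofReal (c₂ * r ^ Q))
    (hlam : 1 < lam) (hlamQ : c₂ ≤ c₁ * lam ^ Q)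
    (D : Set X) (hDopen : IsOpen D) (hDne : D.Nonempty)
    (hDsmall : μ D ≤ ENNReal.ofReal ((1 / 2) * c₁ * (lam⁻¹ * R₀) ^ Q)) :
    ∃ I : Set (X × ℝ), I.Countable ∧
      (∀ p ∈ I, p.1 ∈ D ∧ 0 < p.2 ∧ p.2 ≤ R₀) ∧
      (I.Pairwise fun p p' => Disjoint (ball p.1 p.2) (ball p'.1 p'.2)) ∧
      (D ⊆ ⋃ p ∈ I, ball p.1 (2 * p.2)) ∧
      (∀ p ∈ I, (1 / 2 : ENNReal) * μ (ball p.1 (lam⁻¹ * (lam⁻¹ * p.2)))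
        ≤ μ (D ∩ ball p.1 (lam⁻¹ * p.2))) ∧
      (∀ p ∈ I, μ (D ∩ ball p.1 p.2) ≤ (1 / 2 : ENNReal) * μ (ball p.1 (lam⁻¹ * p.2))) := by
  have hlam0 : (0:ℝ) < lam := lt_trans zero_lt_one hlam
  have hli0 : (0:ℝ) < lam⁻¹ := inv_pos.2 hlam0
  have hli1 : lam⁻¹ < 1 := inv_lt_one_of_one_lt₀ hlam
  -- the scales
  set ρ : ℕ → ℝ := fun k => lam⁻¹ ^ k * R₀ with hρdef
  have hρpos : ∀ k, 0 < ρ k := fun k => mul_pos (pow_pos hli0 k) hR₀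
  have hρle : ∀ k, ρ k ≤ R₀ := by
    intro k
    calc lam⁻¹ ^ k * R₀ ≤ 1 * R₀ := by
          have := pow_le_one₀ hli0.le hli1.le (n := k)
          nlinarith
      _ = R₀ := one_mul R₀
  have hρsucc : ∀ k, ρ (k+1) = lam⁻¹ * ρ k := by
    intro k; simp only [hρdef, pow_succ]; ring
  have hρanti : ∀ {k m : ℕ}, k < m → ρ m < ρ k := by
    intro k m h
    exact mul_lt_mul_of_pos_right (pow_lt_pow_right_of_lt_one₀ hli0 hli1 h) hR₀
  -- half of ofReal
  have hhalf : ∀ a : ℝ, ENNReal.ofReal (1/2 * a) = (1/2 : ENNReal) * ENNReal.ofReal a := by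
    intro a
    rw [ENNReal.ofReal_mul (by norm_num), ENNReal.ofReal_div_of_pos two_pos, ENNReal.ofReal_one,
      ENNReal.ofReal_ofNat]
  -- balls at our scales have positive finite measure
  have hballpos : ∀ (x : X) (k : ℕ), 0 < μ (ball x (ρ k)) := by
    intro x k
    refine lt_of_lt_of_le ?_ (hlow x (ρ k) (hρpos k) (hρle k))
    exact ENNReal.ofReal_pos.2 (by positivity)
  have hballfin : ∀ (x : X) (k : ℕ), μ (ball x (ρ k)) < ⊤ := by
    intro x k
    exact lt_of_le_of_lt (hupp x (ρ k) (hρpos k) (hρle k)) ENNReal.ofReal_lt_top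
  -- the stopping condition
  set P : X → ℕ → Prop := fun x k =>
    μ (D ∩ ball x (ρ k)) ≤ (1/2 : ENNReal) * μ (ball x (ρ (k+1))) with hPdef
  have hP0 : ∀ x : X, P x 0 := by
    intro x
    have h1 : μ (D ∩ ball x (ρ 0)) ≤ μ D := measure_mono inter_subset_left
    have h2 : ENNReal.ofReal ((1/2) * c₁ * (lam⁻¹ * R₀) ^ Q)
        ≤ (1/2 : ENNReal) * μ (ball x (ρ 1)) := by
      have : ρ 1 = lam⁻¹ * R₀ := by simp [hρdef]
      rw [mul_assoc, hhalf, this]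
      exact mul_le_mul_right (hlow x (lam⁻¹ * R₀) (by positivity)
        (by nlinarith [hρle 1, this])) _
    exact le_trans h1 (le_trans hDsmall h2)
  have hPfail : ∀ x ∈ D, ∃ k, ¬ P x k := by
    intro x hx
    obtain ⟨ε, hε, hεD⟩ := Metric.isOpen_iff.1 hDopen x hx
    obtain ⟨k, hk⟩ := exists_pow_lt_of_lt_one (div_pos hε hR₀) hli1
    have hρε : ρ k < ε := by
      calc ρ k = lam⁻¹ ^ k * R₀ := rfl
        _ < (ε / R₀) * R₀ := mul_lt_mul_of_pos_right hk hR₀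
        _ = ε := div_mul_cancel₀ ε hR₀.ne'
    refine ⟨k, ?_⟩
    have hsub : ball x (ρ k) ⊆ D := fun y hy => hεD (lt_of_lt_of_le hy hρε.le)
    have heq : D ∩ ball x (ρ k) = ball x (ρ k) := inter_eq_self_of_subset_right hsub
    intro hcon
    simp only [hPdef] at hcon
    rw [heq] at hcon
    have h1 : μ (ball x (ρ (k+1))) ≤ μ (ball x (ρ k)) :=
      measure_mono (ball_subset_ball (hρanti (Nat.lt_succ_self k)).le)
    have h2 : (1/2 : ENNReal) * μ (ball x (ρ (k+1))) < μ (ball x (ρ (k+1))) := by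
      rw [one_div, ← ENNReal.div_eq_inv_mul]
      exact ENNReal.half_lt_self (hballpos x (k+1)).ne' (hballfin x (k+1)).ne
    exact absurd (le_trans h1 hcon) (not_le.2 h2)
  -- choice of a good radius for each point
  have key : ∀ x ∈ D, ∃ k : ℕ,
      ((1/2 : ENNReal) * μ (ball x (lam⁻¹ * (lam⁻¹ * ρ k))) ≤ μ (D ∩ ball x (lam⁻¹ * ρ k))) ∧
      (μ (D ∩ ball x (ρ k)) ≤ (1/2 : ENNReal) * μ (ball x (lam⁻¹ * ρ k))) := by
    intro x hx
    have hex : ∃ k, ¬ P x k := hPfail x hx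
    set n := Nat.find hex with hn
    have hnP : ¬ P x n := Nat.find_spec hex
    have hn1 : 1 ≤ n := by
      rcases Nat.eq_zero_or_pos n with h | h
      · rw [h] at hnP; exact absurd (hP0 x) hnP
      · exact h
    have h1 : n - 1 + 1 = n := Nat.succ_pred_eq_of_pos hn1
    refine ⟨n - 1, ?_, ?_⟩
    · have h2 : ¬ P x (n - 1 + 1) := by rwa [h1]
      simp only [hPdef] at h2
      push_neg at h2
      have e1 : ρ (n - 1 + 1) = lam⁻¹ * ρ (n - 1) := hρsucc _
      have e2 : ρ (n - 1 + 1 + 1) = lam⁻¹ * (lam⁻¹ * ρ (n - 1)) := by rw [hρsucc, e1]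
      rw [e1, e2] at h2
      exact h2.le
    · have h3 : P x (n - 1) := by
        by_contra hcon
        have h4 : Nat.find hex ≤ n - 1 := Nat.find_le hcon
        rw [← hn] at h4
        omega
      simp only [hPdef] at h3
      rwa [hρsucc] at h3
  choose! rk hrk1 hrk2 using key
  -- the family of candidate balls
  set t : Set (X × ℝ) := {p | p.1 ∈ D ∧ (∃ k : ℕ, p.2 = ρ k) ∧
    ((1/2 : ENNReal) * μ (ball p.1 (lam⁻¹ * (lam⁻¹ * p.2))) ≤ μ (D ∩ ball p.1 (lam⁻¹ * p.2))) ∧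
    (μ (D ∩ ball p.1 p.2) ≤ (1/2 : ENNReal) * μ (ball p.1 (lam⁻¹ * p.2)))} with htdef
  have hmem : ∀ x ∈ D, (x, ρ (rk x)) ∈ t := by
    intro x hx
    exact ⟨hx, ⟨rk x, rfl⟩, hrk1 x hx, hrk2 x hx⟩
  -- Vitali
  obtain ⟨u, hut, hudisj, hucov⟩ := Vitali.exists_disjoint_subfamily_covering_enlargement
    (fun p : X × ℝ => ball p.1 p.2) t (fun p => p.2) ((1 + lam)/2) (by linarith)
    (fun p hp => by
      obtain ⟨-, ⟨k, hk⟩, -⟩ := hp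
      show (0:ℝ) ≤ p.2
      rw [hk]; exact (hρpos k).le) R₀
    (fun p hp => by
      obtain ⟨-, ⟨k, hk⟩, -⟩ := hp
      show p.2 ≤ R₀
      rw [hk]; exact hρle k)
    (fun p hp => by
      obtain ⟨-, ⟨k, hk⟩, -⟩ := hp
      exact nonempty_ball.2 (hk ▸ hρpos k))
  have humem : ∀ p ∈ u, p.1 ∈ D ∧ 0 < p.2 ∧ p.2 ≤ R₀ := by
    intro p hp
    obtain ⟨h1, ⟨k, hk⟩, -⟩ := hut hp
    exact ⟨h1, hk ▸ hρpos k, hk ▸ hρle k⟩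
  refine ⟨u, ?_, humem, hudisj, ?_, fun p hp => (hut hp).2.2.1, fun p hp => (hut hp).2.2.2⟩
  · -- countability
    have hDfin : μ D ≠ ⊤ := (lt_of_le_of_lt hDsmall ENNReal.ofReal_lt_top).ne
    have := MeasureTheory.Measure.countable_meas_pos_of_disjoint_of_meas_iUnion_ne_top
      (ι := ↥u) μ (As := fun i => D ∩ ball i.1.1 (lam⁻¹ * i.1.2))
      (fun i => hDopen.measurableSet.inter measurableSet_ball)
      (fun i j hij => by
        have hij' : (i : X × ℝ) ≠ (j : X × ℝ) := Subtype.coe_injective.ne hij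
        have hd := hudisj i.2 j.2 hij'
        have hs : ∀ q : X × ℝ, 0 < q.2 → D ∩ ball q.1 (lam⁻¹ * q.2) ⊆ ball q.1 q.2 := by
          intro q hq
          refine inter_subset_right.trans (ball_subset_ball ?_)
          nlinarith
        exact (hd.mono (hs _ (humem _ i.2).2.1) (hs _ (humem _ j.2).2.1)))
      (by
        refine ne_top_of_le_ne_top hDfin (measure_mono ?_)
        exact iUnion_subset fun i => inter_subset_left)
    have hall : ∀ i : ↥u, 0 < μ (D ∩ ball i.1.1 (lam⁻¹ * i.1.2)) := by
      intro i
      obtain ⟨hxD, hr0, hrR⟩ := humem _ i.2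
      refine lt_of_lt_of_le ?_ ((hut i.2).2.2.1)
      refine ENNReal.mul_pos (by norm_num) ?_
      have hr2 : 0 < lam⁻¹ * (lam⁻¹ * i.1.2) := by positivity
      have hr2' : lam⁻¹ * (lam⁻¹ * i.1.2) ≤ R₀ := by
        have ha : lam⁻¹ * (lam⁻¹ * i.1.2) ≤ 1 * (lam⁻¹ * i.1.2) :=
          mul_le_mul_of_nonneg_right hli1.le (by positivity)
        have hb : lam⁻¹ * i.1.2 ≤ 1 * i.1.2 := mul_le_mul_of_nonneg_right hli1.le hr0.le
        nlinarith
      refine (lt_of_lt_of_le (ENNReal.ofReal_pos.2 (by positivity))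
        (hlow i.1.1 _ hr2 hr2')).ne'
    have huniv : Set.Countable (Set.univ : Set ↥u) := by
      convert this using 1
      exact (Set.eq_univ_of_forall fun i => hall i).symm
    exact Set.countable_coe_iff.mpr (Set.countable_univ_iff.1 huniv)
  · -- covering
    intro x hx
    obtain ⟨b, hbu, hne, hle⟩ := hucov (x, ρ (rk x)) (hmem x hx)
    obtain ⟨-, ⟨m, hm⟩, -⟩ := hut hbu
    have hb0 : 0 < b.2 := (humem b hbu).2.1
    -- the selected ball is at least as large
    have hrle : ρ (rk x) ≤ b.2 := by
      by_contra hcon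
      push_neg at hcon
      have hkm : rk x < m := by
        by_contra h
        push_neg at h
        rcases eq_or_lt_of_le h with h | h
        · rw [hm, h] at hcon; exact lt_irrefl _ hcon
        · exact absurd (hm ▸ hcon) (not_lt.2 (hρanti h).le)
      have h1 : m ≥ rk x + 1 := hkm
      have h2 : b.2 ≤ ρ (rk x + 1) := by
        rcases eq_or_lt_of_le h1 with h | h
        · rw [hm, ← h]
        · exact hm ▸ (hρanti h).le
      rw [hρsucc] at h2
      have h3 : lam * b.2 ≤ ρ (rk x) := by
        have := mul_le_mul_of_nonneg_left h2 hlam0.le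
        calc lam * b.2 ≤ lam * (lam⁻¹ * ρ (rk x)) := this
          _ = ρ (rk x) := by field_simp
      have h4 : ρ (rk x) ≤ (1 + lam)/2 * b.2 := hle
      nlinarith
    obtain ⟨y, hy1, hy2⟩ := hne
    simp only [mem_ball] at hy1 hy2
    have hx2 : x ∈ ball b.1 (2 * b.2) := by
      rw [mem_ball]
      calc dist x b.1 ≤ dist x y + dist y b.1 := dist_triangle x y b.1
        _ < ρ (rk x) + b.2 := by
            rw [dist_comm x y]; exact add_lt_add hy1 hy2
        _ ≤ 2 * b.2 := by nlinarith
    exact mem_iUnion₂.2 ⟨b, hbu, hx2⟩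
end

section
/- Let m be a positive integer and let ℍ denote the real quaternions. Equip ℍ^m = (Fin m → ℍ) with the quaternionic Hermitian form ⟨x, y⟩ = Σ_{i} conj(x i) * (y i) ∈ ℍ. Let S ⊆ ℍ^m be a real linear subspace such that for all x, y ∈ S the quaternion ⟨x, y⟩ is real (its imaginary part vanishes, i.e. ⟨x,y⟩ = conj ⟨x,y⟩). Then the real dimension of S is at most m. -/
open Finset Quaternion

private lemma quat_combo_eq_zero (r : Fin 4 → ℝ)
    (h : ((r 0 : Quaternion ℝ) * 1 + (r 1 : Quaternion ℝ) * ⟨0,1,0,0⟩ +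
      (r 2 : Quaternion ℝ) * ⟨0,0,1,0⟩ + (r 3 : Quaternion ℝ) * ⟨0,0,0,1⟩) = 0) :
    ∀ k, r k = 0 := by
  have key : ∀ (a b0 b1 b2 b3 : ℝ), ((a : Quaternion ℝ) * ⟨b0,b1,b2,b3⟩) = ⟨a*b0, a*b1, a*b2, a*b3⟩ := by
    intro a b0 b1 b2 b3; erw [Quaternion.coe_mul_eq_smul]; rfl
  rw [key, key, key, mul_one] at h
  have h1 : r 0 + r 1 * 0 + r 2 * 0 + r 3 * 0 = 0 := congrArg QuaternionAlgebra.re h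
  have h2 : 0 + r 1 * 1 + r 2 * 0 + r 3 * 0 = 0 := congrArg QuaternionAlgebra.imI h
  have h3 : 0 + r 1 * 0 + r 2 * 1 + r 3 * 0 = 0 := congrArg QuaternionAlgebra.imJ h
  have h4 : 0 + r 1 * 0 + r 2 * 0 + r 3 * 1 = 0 := congrArg QuaternionAlgebra.imK h
  intro k
  fin_cases k <;> simp at h1 h2 h3 h4 ⊢ <;> linarith

private lemma quat_real_eq_coe_re (q : Quaternion ℝ) (h : star q = q) :
    q = ((q.re : ℝ) : Quaternion ℝ) := by
  have h' := Quaternion.ext_iff.mp h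
  obtain ⟨h1, h2, h3, h4⟩ := h'
  simp only [Quaternion.re_star, Quaternion.imI_star, Quaternion.imJ_star,
    Quaternion.imK_star] at h1 h2 h3 h4
  ext <;> simp <;> linarith

private lemma quat_sum_star_mul_self_eq_zero {m : ℕ} (a : Fin m → Quaternion ℝ)
    (h : (∑ i, star (a i) * a i) = 0) : a = 0 := by
  have h2 : (∑ i, ((normSq (a i) : ℝ) : Quaternion ℝ)) = 0 := by
    simpa only [Quaternion.star_mul_self] using h
  have h3 : (∑ i, normSq (a i) : ℝ) = 0 := by
    apply Quaternion.coe_injective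
    rw [← Quaternion.algebraMap_def, map_sum, Quaternion.algebraMap_def]
    simpa using h2
  funext i
  have := (Finset.sum_eq_zero_iff_of_nonneg
    (fun j _ => Quaternion.normSq_nonneg (a := a j))).mp h3 i (Finset.mem_univ i)
  simpa using Quaternion.normSq_eq_zero.mp this

/-- If `S` is a real subspace of `ℍ^m` on which the quaternionic Hermitian form
`⟨x,y⟩ = Σᵢ conj(xᵢ) yᵢ` takes only real values (i.e. `⟨x,y⟩` equals its conjugate for
all `x, y ∈ S`), then `dim_ℝ S ≤ m`. -/
theorem quaternionic_isotropic_dim_le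
    (m : ℕ) (hm : 0 < m)
    (S : Submodule ℝ (Fin m → Quaternion ℝ))
    (hreal : ∀ x ∈ S, ∀ y ∈ S,
      star (∑ i, star (x i) * y i) = ∑ i, star (x i) * y i) :
    Module.finrank ℝ S ≤ m := by
  classical
  set q : Fin 4 → Quaternion ℝ := ![1, ⟨0,1,0,0⟩, ⟨0,0,1,0⟩, ⟨0,0,0,1⟩] with hq
  let L : (Fin 4 → S) →ₗ[ℝ] (Fin m → Quaternion ℝ) :=
    { toFun := fun f i => ∑ k, (f k : Fin m → Quaternion ℝ) i * q k
      map_add' := by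
        intro f g; funext i
        simp [add_mul, Finset.sum_add_distrib]
      map_smul' := by
        intro c f; funext i
        simp [Finset.smul_sum, smul_mul_assoc] }
  have hLapp : ∀ (f : Fin 4 → S) (i : Fin m),
      L f i = ∑ k, (f k : Fin m → Quaternion ℝ) i * q k := fun f i => rfl
  have hinj : Function.Injective L := by
    rw [injective_iff_map_eq_zero]
    intro f hf
    have key : ∀ x ∈ S, ∀ k : Fin 4,
        (∑ i, star (x i) * ((f k : Fin m → Quaternion ℝ) i)) = 0 := by
      intro x hx k
      set B : Fin 4 → Quaternion ℝ :=
        fun k => ∑ i, star (x i) * ((f k : Fin m → Quaternion ℝ) i) with hB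
      have hsum : (∑ k : Fin 4, B k * q k) = 0 := by
        calc (∑ k : Fin 4, B k * q k)
            = ∑ k : Fin 4, ∑ i, (star (x i) * ((f k : Fin m → Quaternion ℝ) i)) * q k := by
              refine Finset.sum_congr rfl fun k _ => ?_
              rw [hB, Finset.sum_mul]
          _ = ∑ i, ∑ k : Fin 4, (star (x i) * ((f k : Fin m → Quaternion ℝ) i)) * q k :=
              Finset.sum_comm
          _ = ∑ i, star (x i) * (L f i) := by
              refine Finset.sum_congr rfl fun i _ => ?_
              rw [hLapp f i, Finset.mul_sum]
              exact Finset.sum_congr rfl fun k _ => by rw [mul_assoc]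
          _ = 0 := by rw [hf]; simp
      have hBreal : ∀ k, B k = (((B k).re : ℝ) : Quaternion ℝ) := fun k =>
        quat_real_eq_coe_re _ (hreal x hx _ (f k).2)
      have hsum' : (((B 0).re : Quaternion ℝ) * 1
          + ((B 1).re : Quaternion ℝ) * ⟨0,1,0,0⟩
          + ((B 2).re : Quaternion ℝ) * ⟨0,0,1,0⟩
          + ((B 3).re : Quaternion ℝ) * ⟨0,0,0,1⟩) = 0 := by
        rw [Fin.sum_univ_four] at hsum
        simp only [hq, Matrix.cons_val_zero, Matrix.cons_val_one, Matrix.head_cons,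
          Matrix.cons_val_two, Matrix.cons_val_three, Matrix.vecHead, Matrix.vecTail,
          Function.comp] at hsum
        rw [← hBreal 0, ← hBreal 1, ← hBreal 2, ← hBreal 3]
        exact hsum
      have hre := quat_combo_eq_zero (fun k => (B k).re) hsum' k
      rw [hB] at hBreal
      calc (∑ i, star (x i) * ((f k : Fin m → Quaternion ℝ) i))
          = (((B k).re : ℝ) : Quaternion ℝ) := hBreal k
        _ = 0 := by rw [hre]; simp
    funext k
    have hk := key (f k) (f k).2 k
    have : (f k : Fin m → Quaternion ℝ) = 0 := quat_sum_star_mul_self_eq_zero _ hk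
    exact Subtype.ext this
  have hle := LinearMap.finrank_le_finrank_of_injective hinj
  have h1 : Module.finrank ℝ (Fin 4 → S) = 4 * Module.finrank ℝ S := by
    rw [Module.finrank_pi_fintype]
    simp [Finset.sum_const, mul_comm]
  have h2 : Module.finrank ℝ (Fin m → Quaternion ℝ) = m * 4 := by
    rw [Module.finrank_pi_fintype]
    simp [Quaternion.finrank_eq_four]
  rw [h1, h2] at hle
  omega
end

section
/- Let n be a positive integer, w : Fin n → ℕ a function with w i ≥ 1 for all i, and for ε > 0 let δ_ε : ℝ^n → ℝ^n be the linear map (δ_ε x) i = ε^{w i} · x i. Fix q ≥ 1 and let α : (ℝ^n)^q → ℝ be an alternating multilinear map (a constant-coefficient q-form on ℝ^n). For an integer W ≥ 0, say that α has weight ≥ W if α(e_{i₁}, …, e_{i_q}) = 0 whenever i₁, …, i_q are indices with w(i₁) + ⋯ + w(i_q) < W, where (e_i) is the standard basis of ℝ^n. Then α has weight ≥ W if and only if there exists a constant C ≥ 0 such that for all 0 < ε ≤ 1, the pullback δ_ε*α, defined by (δ_ε*α)(v₁, …, v_q) = α(δ_ε v₁, …, δ_ε v_q), satisfies sup{|(δ_ε*α)(v₁,…,v_q)|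 : ‖v₁‖ ≤ 1, …, ‖v_q‖ ≤ 1} ≤ C · ε^W. -/
open Finset

/-- The anisotropic dilation `δ_ε` on `ℝ^n` with coordinate weights `w`. -/
def anisotropicDilation {n : ℕ} (w : Fin n → ℕ) (ε : ℝ) (x : Fin n → ℝ) : Fin n → ℝ :=
  fun i => ε ^ (w i) * x i

lemma expand_aux {n q : ℕ} (w : Fin n → ℕ) (α : (Fin n → ℝ) [⋀^Fin q]→ₗ[ℝ] ℝ)
    (ε : ℝ) (v : Fin q → (Fin n → ℝ)) :
    α (fun j => anisotropicDilation w ε (v j)) =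
      ∑ idx : Fin q → Fin n, (∏ j, ε ^ w (idx j) * v j (idx j)) •
        α (fun j => Pi.single (idx j) (1 : ℝ)) := by
  have h1 : ∀ j, anisotropicDilation w ε (v j)
      = ∑ i, (ε ^ w i * v j i) • (Pi.single i (1 : ℝ) : Fin n → ℝ) := by
    intro j
    funext k
    simp [anisotropicDilation, Finset.sum_apply, Pi.single_apply, mul_ite]
  calc α (fun j => anisotropicDilation w ε (v j))
      = α.toMultilinearMap (fun j => ∑ i, (ε ^ w i * v j i) • (Pi.single i (1 : ℝ) : Fin n → ℝ)) := by
        simp only [← h1]; rfl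
    _ = ∑ idx : Fin q → Fin n, α.toMultilinearMap
          (fun j => (ε ^ w (idx j) * v j (idx j)) • (Pi.single (idx j) (1 : ℝ) : Fin n → ℝ)) :=
        α.toMultilinearMap.map_sum _
    _ = _ := by
        refine Finset.sum_congr rfl fun idx _ => ?_
        rw [α.toMultilinearMap.map_smul_univ]
        rfl

/-- A constant-coefficient `q`-form `α` on `ℝ^n` has weight `≥ W` (it vanishes on all
standard basis `q`-tuples of total weight `< W`) if and only if the sup-norm of the
pullback `δ_ε*α` is `O(ε^W)` for `0 < ε ≤ 1`. -/
theorem weight_ge_iff_dilation_decay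
    (n : ℕ) (hn : 0 < n) (w : Fin n → ℕ) (hw : ∀ i, 1 ≤ w i)
    (q : ℕ) (hq : 1 ≤ q) (α : (Fin n → ℝ) [⋀^Fin q]→ₗ[ℝ] ℝ) (W : ℕ) :
    (∀ idx : Fin q → Fin n, (∑ j, w (idx j)) < W →
        α (fun j => Pi.single (idx j) (1 : ℝ)) = 0) ↔
    (∃ C : ℝ, 0 ≤ C ∧ ∀ ε : ℝ, 0 < ε → ε ≤ 1 →
        ∀ v : Fin q → (Fin n → ℝ), (∀ j, ‖v j‖ ≤ 1) →
          |α (fun j => anisotropicDilation w ε (v j))| ≤ C * ε ^ W) := by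
  constructor
  · intro hvan
    refine ⟨∑ idx : Fin q → Fin n, |α (fun j => Pi.single (idx j) (1 : ℝ))|,
      Finset.sum_nonneg fun _ _ => abs_nonneg _, fun ε hε hε1 v hv => ?_⟩
    rw [expand_aux]
    calc |∑ idx : Fin q → Fin n, (∏ j, ε ^ w (idx j) * v j (idx j)) •
            α (fun j => Pi.single (idx j) (1 : ℝ))|
        ≤ ∑ idx : Fin q → Fin n, |(∏ j, ε ^ w (idx j) * v j (idx j)) •
            α (fun j => Pi.single (idx j) (1 : ℝ))| := Finset.abs_sum_le_sum_abs _ _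
      _ ≤ ∑ idx : Fin q → Fin n, |α (fun j => Pi.single (idx j) (1 : ℝ))| * ε ^ W := by
          refine Finset.sum_le_sum fun idx _ => ?_
          rw [smul_eq_mul, abs_mul]
          by_cases h : (∑ j, w (idx j)) < W
          · simp [hvan idx h]
          · push_neg at h
            have h2 : |∏ j, ε ^ w (idx j) * v j (idx j)| ≤ ε ^ W := by
              rw [abs_prod]
              calc ∏ j, |ε ^ w (idx j) * v j (idx j)|
                  ≤ ∏ j : Fin q, ε ^ w (idx j) := by
                    refine Finset.prod_le_prod (fun _ _ => abs_nonneg _) fun j _ => ?_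
                    rw [abs_mul, abs_pow, abs_of_pos hε]
                    calc ε ^ w (idx j) * |v j (idx j)|
                        ≤ ε ^ w (idx j) * 1 := by
                          refine mul_le_mul_of_nonneg_left ?_ (by positivity)
                          exact (norm_le_pi_norm (v j) (idx j)).trans (hv j)
                      _ = ε ^ w (idx j) := mul_one _
                _ = ε ^ (∑ j, w (idx j)) := Finset.prod_pow_eq_pow_sum _ _ _
                _ ≤ ε ^ W := pow_le_pow_of_le_one hε.le hε1 h
            calc |∏ j, ε ^ w (idx j) * v j (idx j)| * |α fun j => Pi.single (idx j) 1|
                ≤ ε ^ W * |α fun j => Pi.single (idx j) 1| :=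
                  mul_le_mul_of_nonneg_right h2 (abs_nonneg _)
              _ = _ := mul_comm _ _
      _ = (∑ idx : Fin q → Fin n, |α (fun j => Pi.single (idx j) (1 : ℝ))|) * ε ^ W :=
          (Finset.sum_mul _ _ _).symm
  · rintro ⟨C, hC, hbd⟩ idx hidx
    set a := α (fun j => Pi.single (idx j) (1 : ℝ)) with ha
    set s := ∑ j, w (idx j) with hs
    have key : ∀ ε : ℝ, 0 < ε → ε ≤ 1 → |a| ≤ C * ε := by
      intro ε hε hε1
      have hv : ∀ j : Fin q, ‖(Pi.single (idx j) (1 : ℝ) : Fin n → ℝ)‖ ≤ 1 := by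
        intro j
        refine (pi_norm_le_iff_of_nonneg zero_le_one).2 fun i => ?_
        rw [Pi.single_apply]
        split <;> simp
      have h1 := hbd ε hε hε1 (fun j => Pi.single (idx j) (1 : ℝ)) hv
      have h2 : α (fun j => anisotropicDilation w ε (Pi.single (idx j) (1:ℝ)))
          = ε ^ s • a := by
        have heq : (fun j => anisotropicDilation w ε (Pi.single (idx j) (1:ℝ)))
            = fun j => (ε ^ w (idx j)) • (Pi.single (idx j) (1:ℝ) : Fin n → ℝ) := by
          funext j k
          simp only [anisotropicDilation, Pi.smul_apply, smul_eq_mul, Pi.single_apply]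
          split <;> simp_all
        rw [heq,
          show α (fun j => (ε ^ w (idx j)) • (Pi.single (idx j) (1:ℝ) : Fin n → ℝ))
            = (∏ j, ε ^ w (idx j)) • α (fun j => Pi.single (idx j) (1:ℝ)) from
            α.toMultilinearMap.map_smul_univ _ _,
          Finset.prod_pow_eq_pow_sum, ← ha, ← hs]
      rw [h2, smul_eq_mul, abs_mul, abs_pow, abs_of_pos hε] at h1
      have hsW : W = s + (W - s) := by omega
      have h3 : |a| ≤ C * ε ^ (W - s) := by
        have hεs : (0:ℝ) < ε ^ s := by positivity
        rw [hsW, pow_add] at h1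
        have h1' : ε ^ s * |a| ≤ ε ^ s * (C * ε ^ (W - s)) := by linarith [h1]
        exact le_of_mul_le_mul_left (by linarith [h1']) hεs
      calc |a| ≤ C * ε ^ (W - s) := h3
        _ ≤ C * ε := by
            refine mul_le_mul_of_nonneg_left ?_ hC
            calc ε ^ (W - s) ≤ ε ^ 1 :=
              pow_le_pow_of_le_one hε.le hε1 (by omega)
              _ = ε := pow_one ε
    have habs : |a| ≤ 0 := by
      refine le_of_forall_pos_le_add fun δ hδ => ?_
      have hC1 : (0:ℝ) < C + 1 := by linarith
      have hεpos : 0 < min 1 (δ / (C + 1)) := lt_min one_pos (by positivity)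
      have h := key _ hεpos (min_le_left _ _)
      have h4 : C * min 1 (δ / (C + 1)) ≤ C * (δ / (C + 1)) :=
        mul_le_mul_of_nonneg_left (min_le_right _ _) hC
      have h5 : C * (δ / (C + 1)) ≤ δ := by
        rw [← mul_div_assoc, div_le_iff₀ hC1]
        nlinarith
      linarith
    exact abs_eq_zero.1 (le_antisymm habs (abs_nonneg a))
end
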